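/- Let (g, [·,·]_g) be a graded Lie algebra of degree ℓ = 0 with total basis (t₁, t₂) where |t₁| = q ≠ 0, |t₂| = 0 and brackets [t₁,t₂]_g = t₁, [t₁,t₁]_g = 0, [t₂,t₂]_g = 0, and let (g*, [·,·]_{g*}) be the graded Lie algebra of degree ℓ' = q with dual basis (t¹,t²), |t¹| = -q, |t²| = 0, and brackets [t¹,t²]_{g*} = t², [t¹,t¹]_{g*} = 0, [t²,t²]_{g*} = 0. Then the double d = g[q] ⊕ g*[0] with bracket given by the graded Lie bialgebra double formula, whose mixed brackets are [(t₁,0),(0,t¹)]_d = (0,-t²), [(t₁,0),(0,t²)]_d = (0,0), [(t₂,0),(0,t²)]_d = (-t₁,0), [(t₂,0),(0,t¹)]_d = (t₂,t¹), is a graded Lie algebra of degree q; in particular its bracket satisfies graded skew-symmetry and the graded Jacobi identity of degree q. -/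
import Mathlib

/-- basis vectors of the double `d = g[q] ⊕ g*[0]`:
`e 0 = (t₁,0)`, `e 1 = (t₂,0)`, `e 2 = (0,t¹)`, `e 3 = (0,t²)`. -/
def dblE (k : Fin 4) : Fin 4 → ℝ := fun n => if n = k then 1 else 0

/-- structure constants of the double bracket: rows indexed by the first argument.
Within `g`: `[t₁,t₂] = t₁`; within `g*`: `[t¹,t²] = t²`; the mixed brackets are
`[(t₁,0),(0,t¹)] = (0,-t²)`, `[(t₁,0),(0,t²)] = 0`, `[(t₂,0),(0,t²)] = (-t₁,0)`,
`[(t₂,0),(0,t¹)] = (t₂,t¹)`, completed by graded skew-symmetry. -/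
noncomputable def dblC : Fin 4 → Fin 4 → (Fin 4 → ℝ) :=
  ![![0, dblE 0, -(dblE 3), 0],
    ![-(dblE 0), 0, dblE 1 + dblE 2, -(dblE 0)],
    ![dblE 3, -(dblE 1 + dblE 2), 0, dblE 3],
    ![0, dblE 0, -(dblE 3), 0]]

/-- the bilinear bracket on the double `d`, extended from the structure constants. -/
noncomputable def dblBra (x y : Fin 4 → ℝ) : Fin 4 → ℝ :=
  ∑ i : Fin 4, ∑ j : Fin 4, (x i * y j) • dblC i j

/-- the grading of the double: `(t₁,0)` and `(0,t²)` have degree `0`;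
`(t₂,0)` and `(0,t¹)` have degree `-q`. -/
noncomputable def dblGr (q d : ℤ) : Submodule ℝ (Fin 4 → ℝ) :=
  if d = 0 then Submodule.span ℝ {dblE 0, dblE 3}
  else if d = -q then Submodule.span ℝ {dblE 1, dblE 2}
  else ⊥

lemma dblBra_apply (x y : Fin 4 → ℝ) :
    dblBra x y = ![x 0 * y 1 - x 1 * y 0 - x 1 * y 3 + x 3 * y 1,
                   x 1 * y 2 - x 2 * y 1,
                   x 1 * y 2 - x 2 * y 1,
                   -(x 0 * y 2) + x 2 * y 0 + x 2 * y 3 - x 3 * y 2] := by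
  funext n
  fin_cases n <;>
    simp [dblBra, dblC, dblE, Fin.sum_univ_four, Matrix.cons_val_zero, Matrix.cons_val_one,
      Matrix.vecHead, Matrix.vecTail] <;>
    ring

lemma dblBra_zero_left (y : Fin 4 → ℝ) : dblBra 0 y = 0 := by
  funext n; fin_cases n <;> simp [dblBra_apply]

lemma dblBra_zero_right (x : Fin 4 → ℝ) : dblBra x 0 = 0 := by
  funext n; fin_cases n <;> simp [dblBra_apply]

lemma dblBra_antisymm (x y : Fin 4 → ℝ) : dblBra x y = -dblBra y x := by
  funext n; fin_cases n <;> simp [dblBra_apply] <;> ring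

lemma combo0 (c d : ℝ) : c • dblE 0 + d • dblE 3 = ![c, 0, 0, d] := by
  funext n; fin_cases n <;> simp [dblE]

lemma comboq (c d : ℝ) : c • dblE 1 + d • dblE 2 = ![0, c, d, 0] := by
  funext n; fin_cases n <;> simp [dblE]

lemma dblGr_zero (q : ℤ) : dblGr q 0 = Submodule.span ℝ {dblE 0, dblE 3} := by
  simp [dblGr]

lemma dblGr_negq (q : ℤ) (hq : q ≠ 0) :
    dblGr q (-q) = Submodule.span ℝ {dblE 1, dblE 2} := by
  rw [dblGr, if_neg (by omega), if_pos rfl]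

lemma dblGr_other (q d : ℤ) (h0 : d ≠ 0) (hd : d ≠ -q) : dblGr q d = ⊥ := by
  rw [dblGr, if_neg h0, if_neg hd]

lemma bra00 (c d c' d' : ℝ) : dblBra ![c, 0, 0, d] ![c', 0, 0, d'] = 0 := by
  funext n; fin_cases n <;> simp [dblBra_apply]

lemma bra0q (c d c' d' : ℝ) :
    dblBra ![c, 0, 0, d] ![0, c', d', 0]
      = (c * c' + d * c') • dblE 0 + (-(c * d') - d * d') • dblE 3 := by
  rw [combo0]; funext n; fin_cases n <;> simp [dblBra_apply] <;> ring

lemma braq0 (c d c' d' : ℝ) :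
    dblBra ![0, c, d, 0] ![c', 0, 0, d']
      = (-(c * c') - c * d') • dblE 0 + (d * c' + d * d') • dblE 3 := by
  rw [combo0]; funext n; fin_cases n <;> simp [dblBra_apply] <;> ring

lemma braqq (c d c' d' : ℝ) :
    dblBra ![0, c, d, 0] ![0, c', d', 0]
      = (c * d' - d * c') • dblE 1 + (c * d' - d * c') • dblE 2 := by
  rw [comboq]; funext n; fin_cases n <;> simp [dblBra_apply] <;> ring

lemma jac00a (c d c' d' : ℝ) (z : Fin 4 → ℝ) :
    dblBra ![c, 0, 0, d] (dblBra ![c', 0, 0, d'] z) = 0 := by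
  funext n; fin_cases n <;> simp [dblBra_apply]

lemma jac0q (c d c' d' : ℝ) (z : Fin 4 → ℝ) :
    dblBra ![c, 0, 0, d] (dblBra ![0, c', d', 0] z)
      = dblBra (dblBra ![c, 0, 0, d] ![0, c', d', 0]) z
        + dblBra ![0, c', d', 0] (dblBra ![c, 0, 0, d] z) := by
  funext n; fin_cases n <;> simp [dblBra_apply, Pi.add_apply] <;> ring

lemma jacq0 (c d c' d' : ℝ) (z : Fin 4 → ℝ) :
    dblBra ![0, c, d, 0] (dblBra ![c', 0, 0, d'] z)
      = dblBra (dblBra ![0, c, d, 0] ![c', 0, 0, d']) z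
        + dblBra ![c', 0, 0, d'] (dblBra ![0, c, d, 0] z) := by
  funext n; fin_cases n <;> simp [dblBra_apply, Pi.add_apply] <;> ring

lemma jacqq (c d c' d' : ℝ) (z : Fin 4 → ℝ) :
    dblBra ![0, c, d, 0] (dblBra ![0, c', d', 0] z)
      = dblBra (dblBra ![0, c, d, 0] ![0, c', d', 0]) z
        + dblBra ![0, c', d', 0] (dblBra ![0, c, d, 0] z) := by
  funext n; fin_cases n <;> simp [dblBra_apply, Pi.add_apply] <;> ring

/-- For the graded Lie bialgebra `(g, g*)` of bidegree `(0,q)` with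
`|t₁| = q ≠ 0`, `|t₂| = 0`, `[t₁,t₂]_g = t₁`, `[t¹,t²]_{g*} = t²`, the double
`d = g[q] ⊕ g*[0]` with the bracket given by the graded Lie bialgebra double formula
(whose mixed brackets are the ones recorded in `dblC`) is a graded Lie algebra of degree
`q`: the bracket has degree `q`, is graded skew-symmetric and satisfies the graded Jacobi
identity of degree `q`. -/
theorem stmt_15 (q : ℤ) (hq : q ≠ 0) :
    (∀ a b x y, x ∈ dblGr q a → y ∈ dblGr q b → dblBra x y ∈ dblGr q (a + b + q)) ∧
    (∀ a b x y, x ∈ dblGr q a → y ∈ dblGr q b →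
      dblBra x y = -((-1 : ℝ) ^ ((a + q) * (b + q)) • dblBra y x)) ∧
    (∀ a b x y (z : Fin 4 → ℝ), x ∈ dblGr q a → y ∈ dblGr q b →
      dblBra x (dblBra y z)
        = dblBra (dblBra x y) z + (-1 : ℝ) ^ ((a + q) * (b + q)) • dblBra y (dblBra x z)) := by
  refine ⟨?_, ?_, ?_⟩
  · intro a b x y hx hy
    by_cases ha0 : a = 0
    · subst ha0
      rw [dblGr_zero, Submodule.mem_span_pair] at hx
      obtain ⟨c, d, rfl⟩ := hx
      rw [combo0]
      by_cases hb0 : b = 0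
      · subst hb0
        rw [dblGr_zero, Submodule.mem_span_pair] at hy
        obtain ⟨c', d', rfl⟩ := hy
        rw [combo0, bra00]
        exact Submodule.zero_mem _
      · by_cases hbq : b = -q
        · subst hbq
          rw [dblGr_negq q hq, Submodule.mem_span_pair] at hy
          obtain ⟨c', d', rfl⟩ := hy
          rw [comboq, show (0 : ℤ) + -q + q = 0 by ring, dblGr_zero, bra0q]
          exact Submodule.mem_span_pair.2 ⟨_, _, rfl⟩
        · rw [dblGr_other q b hb0 hbq, Submodule.mem_bot] at hy
          subst hy
          rw [dblBra_zero_right]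
          exact Submodule.zero_mem _
    · by_cases haq : a = -q
      · subst haq
        rw [dblGr_negq q hq, Submodule.mem_span_pair] at hx
        obtain ⟨c, d, rfl⟩ := hx
        rw [comboq]
        by_cases hb0 : b = 0
        · subst hb0
          rw [dblGr_zero, Submodule.mem_span_pair] at hy
          obtain ⟨c', d', rfl⟩ := hy
          rw [combo0, show -q + (0 : ℤ) + q = 0 by ring, dblGr_zero, braq0]
          exact Submodule.mem_span_pair.2 ⟨_, _, rfl⟩
        · by_cases hbq : b = -q
          · subst hbq
            rw [dblGr_negq q hq, Submodule.mem_span_pair] at hy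
            obtain ⟨c', d', rfl⟩ := hy
            rw [comboq, show -q + -q + q = -q by ring, dblGr_negq q hq, braqq]
            exact Submodule.mem_span_pair.2 ⟨_, _, rfl⟩
          · rw [dblGr_other q b hb0 hbq, Submodule.mem_bot] at hy
            subst hy
            rw [dblBra_zero_right]
            exact Submodule.zero_mem _
      · rw [dblGr_other q a ha0 haq, Submodule.mem_bot] at hx
        subst hx
        rw [dblBra_zero_left]
        exact Submodule.zero_mem _
  · intro a b x y hx hy
    by_cases ha0 : a = 0
    · subst ha0
      rw [dblGr_zero, Submodule.mem_span_pair] at hx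
      obtain ⟨c, d, rfl⟩ := hx
      rw [combo0]
      by_cases hb0 : b = 0
      · subst hb0
        rw [dblGr_zero, Submodule.mem_span_pair] at hy
        obtain ⟨c', d', rfl⟩ := hy
        rw [combo0, bra00, bra00]
        simp
      · rw [show ((0 : ℤ) + q) * (b + q) = (b + q) * q by ring]
        by_cases hbq : b = -q
        · subst hbq
          rw [show (-q + q) * q = 0 by ring, zpow_zero, one_smul, ← dblBra_antisymm]
        · rw [dblGr_other q b hb0 hbq, Submodule.mem_bot] at hy
          subst hy
          rw [dblBra_zero_left, dblBra_zero_right]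
          simp
    · by_cases haq : a = -q
      · subst haq
        rw [show (-q + q) * (b + q) = 0 by ring, zpow_zero, one_smul, ← dblBra_antisymm]
      · rw [dblGr_other q a ha0 haq, Submodule.mem_bot] at hx
        subst hx
        rw [dblBra_zero_left, dblBra_zero_right]
        simp
  · intro a b x y z hx hy
    by_cases ha0 : a = 0
    · subst ha0
      rw [dblGr_zero, Submodule.mem_span_pair] at hx
      obtain ⟨c, d, rfl⟩ := hx
      rw [combo0]
      by_cases hb0 : b = 0
      · subst hb0
        rw [dblGr_zero, Submodule.mem_span_pair] at hy
        obtain ⟨c', d', rfl⟩ := hy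
        rw [combo0, jac00a, bra00, dblBra_zero_left, jac00a]
        simp
      · by_cases hbq : b = -q
        · subst hbq
          rw [dblGr_negq q hq, Submodule.mem_span_pair] at hy
          obtain ⟨c', d', rfl⟩ := hy
          rw [comboq, show ((0 : ℤ) + q) * (-q + q) = 0 by ring, zpow_zero, one_smul]
          exact jac0q c d c' d' z
        · rw [dblGr_other q b hb0 hbq, Submodule.mem_bot] at hy
          subst hy
          simp [dblBra_zero_left, dblBra_zero_right]
    · by_cases haq : a = -q
      · subst haq
        rw [dblGr_negq q hq, Submodule.mem_span_pair] at hx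
        obtain ⟨c, d, rfl⟩ := hx
        rw [comboq, show (-q + q) * (b + q) = 0 by ring, zpow_zero, one_smul]
        by_cases hb0 : b = 0
        · subst hb0
          rw [dblGr_zero, Submodule.mem_span_pair] at hy
          obtain ⟨c', d', rfl⟩ := hy
          rw [combo0]
          exact jacq0 c d c' d' z
        · by_cases hbq : b = -q
          · subst hbq
            rw [dblGr_negq q hq, Submodule.mem_span_pair] at hy
            obtain ⟨c', d', rfl⟩ := hy
            rw [comboq]
            exact jacqq c d c' d' z
          · rw [dblGr_other q b hb0 hbq, Submodule.mem_bot] at hy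
            subst hy
            simp [dblBra_zero_left, dblBra_zero_right]
      · rw [dblGr_other q a ha0 haq, Submodule.mem_bot] at hx
        subst hx
        simp [dblBra_zero_left, dblBra_zero_right]
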